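/- arXiv:1912.13212 — 4 statements merged into one kernel-verified Lean document; each statement's English description precedes it below -/
import Mathlib

section
/- Let X have the anomalous distribution with density c₃ exp(−α₂ x) on [a_{2n}, a_{2n+1}) and c₃ exp(−α₁ x) on [a_{2n−1}, a_{2n}), where 0 < α₁ < α₂, a₀ = 0, a_{n+1} = 2^{a_n}. Then there exist constants c₄, c₅ > 0 such that for all sufficiently large t, c₄ exp(−α₂ t) ≤ P(X > t) ≤ c₅ exp(−α₁ t). -/
open MeasureTheory

/-- The sequence a₀ = 0, a_{n+1} = 2^{a_n}. -/
noncomputable def aseq : ℕ → ℝ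
  | 0 => 0
  | n + 1 => (2 : ℝ) ^ (aseq n)

-- The unnormalized density of the anomalous distribution: `exp (-α₂ x)` on the
-- intervals `[a_{2n}, a_{2n+1})`, `exp (-α₁ x)` on the intervals `[a_{2n-1}, a_{2n})`
-- (these two families of intervals cover `[0, ∞)`), and zero on the negative reals.
open Classical in
noncomputable def anomDensity (α₁ α₂ : ℝ) (x : ℝ) : ℝ :=
  if x < 0 then 0
  else if ∃ n : ℕ, aseq (2 * n) ≤ x ∧ x < aseq (2 * n + 1) then Real.exp (-α₂ * x)
  else Real.exp (-α₁ * x)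

/-! On `[0, ∞)` the density agrees at every point with `exp (-α₂ x)` or with `exp (-α₁ x)`,
so it is pinched between the two. Integrating these bounds over `(t, ∞)` gives
`c₃ / α₂ · exp (-α₂ t) ≤ P(X > t) ≤ c₃ / α₁ · exp (-α₁ t)` for every `t ≥ 0`. -/

open ENNReal Set

lemma exp_neg_mul_le_anomDensity {α₁ α₂ x : ℝ} (h₁₂ : α₁ ≤ α₂) (hx : 0 ≤ x) :
    Real.exp (-α₂ * x) ≤ anomDensity α₁ α₂ x := by
  have hexp : Real.exp (-α₂ * x) ≤ Real.exp (-α₁ * x) := Real.exp_le_exp.2 (by nlinarith)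
  rw [anomDensity, if_neg hx.not_gt]
  split_ifs
  exacts [le_rfl, hexp]

lemma anomDensity_le_exp_neg_mul {α₁ α₂ x : ℝ} (h₁₂ : α₁ ≤ α₂) (hx : 0 ≤ x) :
    anomDensity α₁ α₂ x ≤ Real.exp (-α₁ * x) := by
  have hexp : Real.exp (-α₂ * x) ≤ Real.exp (-α₁ * x) := Real.exp_le_exp.2 (by nlinarith)
  rw [anomDensity, if_neg hx.not_gt]
  split_ifs
  exacts [hexp, le_rfl]

lemma setLIntegral_Ioi_ofReal_mul_exp_neg_mul {b c : ℝ} (hb : 0 < b) (hc : 0 ≤ c) (t : ℝ) :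
    ∫⁻ x in Ioi t, ENNReal.ofReal (c * Real.exp (-b * x)) =
      ENNReal.ofReal (c / b * Real.exp (-b * t)) := by
  rw [← ofReal_integral_eq_lintegral_ofReal ((exp_neg_integrableOn_Ioi t hb).const_mul c)
      (ae_of_all _ fun x => by positivity),
    integral_const_mul, integral_exp_mul_Ioi (neg_neg_of_pos hb)]
  congr 1
  field_simp

lemma measure_preimage_eq_setLIntegral_of_map_eq_withDensity {Ω α : Type*}
    [MeasurableSpace Ω] [MeasurableSpace α] {μ : Measure Ω} {ν : Measure α} {X : Ω → α}
    {f : α → ℝ≥0∞} (hX : Measurable X) (hmap : μ.map X = ν.withDensity f)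
    {s : Set α} (hs : MeasurableSet s) :
    μ (X ⁻¹' s) = ∫⁻ x in s, f x ∂ν := by
  rw [← Measure.map_apply hX hs, hmap, withDensity_apply f hs]

theorem anom_two_sided_tail_general {Ω : Type*} [MeasurableSpace Ω]
    (μ : Measure Ω) [IsProbabilityMeasure μ]
    (α₁ α₂ c₃ : ℝ) (h₁ : 0 < α₁) (h₁₂ : α₁ < α₂) (hc₃ : 0 < c₃)
    (X : Ω → ℝ) (hX : Measurable X)
    (hmap : Measure.map X μ =
      volume.withDensity (fun x => ENNReal.ofReal (c₃ * anomDensity α₁ α₂ x))) :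
    ∃ c₄ > 0, ∃ c₅ > 0, ∀ᶠ t in Filter.atTop,
      c₄ * Real.exp (-α₂ * t) ≤ (μ {ω | t < X ω}).toReal ∧
      (μ {ω | t < X ω}).toReal ≤ c₅ * Real.exp (-α₁ * t) := by
  have h₂ : 0 < α₂ := h₁.trans h₁₂
  refine ⟨c₃ / α₂, by positivity, c₃ / α₁, by positivity, ?_⟩
  filter_upwards [Filter.eventually_ge_atTop 0] with t ht
  have htail : μ {ω | t < X ω} = ∫⁻ x in Ioi t, ENNReal.ofReal (c₃ * anomDensity α₁ α₂ x) :=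
    measure_preimage_eq_setLIntegral_of_map_eq_withDensity hX hmap measurableSet_Ioi
  have hlower : ENNReal.ofReal (c₃ / α₂ * Real.exp (-α₂ * t)) ≤ μ {ω | t < X ω} := by
    rw [htail, ← setLIntegral_Ioi_ofReal_mul_exp_neg_mul h₂ hc₃.le]
    exact setLIntegral_mono' measurableSet_Ioi fun x hx => ofReal_le_ofReal <|
      mul_le_mul_of_nonneg_left (exp_neg_mul_le_anomDensity h₁₂.le (ht.trans hx.le)) hc₃.le
  have hupper : μ {ω | t < X ω} ≤ ENNReal.ofReal (c₃ / α₁ * Real.exp (-α₁ * t)) := by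
    rw [htail, ← setLIntegral_Ioi_ofReal_mul_exp_neg_mul h₁ hc₃.le]
    exact setLIntegral_mono' measurableSet_Ioi fun x hx => ofReal_le_ofReal <|
      mul_le_mul_of_nonneg_left (anomDensity_le_exp_neg_mul h₁₂.le (ht.trans hx.le)) hc₃.le
  exact ⟨(ofReal_le_iff_le_toReal (measure_ne_top _ _)).1 hlower,
    toReal_le_of_le_ofReal (by positivity) hupper⟩

theorem anom_two_sided_tail {Ω : Type*} [MeasurableSpace Ω]
    (μ : Measure Ω) [IsProbabilityMeasure μ]
    (α₁ α₂ c₃ : ℝ) (h₁ : 0 < α₁) (h₁₂ : α₁ < α₂) (hc₃ : 0 < c₃)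
    (hnorm : ∫ x in Set.Ici (0 : ℝ), c₃ * anomDensity α₁ α₂ x = 1)
    (X : Ω → ℝ) (hX : Measurable X)
    (hmap : Measure.map X μ =
      volume.withDensity (fun x => ENNReal.ofReal (c₃ * anomDensity α₁ α₂ x))) :
    ∃ c₄ > 0, ∃ c₅ > 0, ∀ᶠ t in Filter.atTop,
      c₄ * Real.exp (-α₂ * t) ≤ (μ {ω | t < X ω}).toReal ∧
      (μ {ω | t < X ω}).toReal ≤ c₅ * Real.exp (-α₁ * t) :=
  anom_two_sided_tail_general μ α₁ α₂ c₃ h₁ h₁₂ hc₃ X hX hmap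
end

section
/- Let X_1,…,X_k be i.i.d. with the anomalous distribution having density c₃ exp(−α₂ x) on [a_{2n}, a_{2n+1}) and c₃ exp(−α₁ x) on [a_{2n−1}, a_{2n}), 0 < α₁ < α₂, a₀ = 0, a_{n+1} = 2^{a_n}. Then for any c > 0 and any ξ > ε > 0, there exists n₀ = n₀(k, c) such that for all n ≥ n₀, P(∑_{i=1}^k X_i > (ξ−ε) a_{2n}²) ≤ exp(−(1−c) α₂ (ξ−ε) a_{2n}²). -/
/-!
Write `a = a_{2n}` and `T = a_{2n+1} = 2^a`. On `∑ Xᵢ > s` either some `Xᵢ ≥ T`, which has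
probability at most `k c₃/α₁ · e^{-α₁ 2^a}`, negligible against `e^{-α₂ a²}`; or all `Xᵢ < T`,
and Chernoff's bound applies to the truncated variables. Below `a` the density is at most `c₃`
and on `[a, T)` it is `c₃ e^{-α₂ x}`, so for `t < α₂` the truncated exponential moment is at most
`c₃ (a e^{ta} + 1/(α₂ - t)) = e^{O(a)}`. Choosing `(1 - c) α₂ < t < α₂`, the Chernoff term
`e^{-ts}` times the `k`-th power of this moment is eventually below `e^{-(1-c) α₂ s}` for
`s = (ξ - ε) a²`.
-/

open MeasureTheory

open Filter Real Set
open scoped ENNReal Topology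

lemma aseq_succ (n : ℕ) : aseq (n + 1) = 2 ^ aseq n := rfl

lemma aseq_nonneg : ∀ n, 0 ≤ aseq n
  | 0 => le_rfl
  | _ + 1 => (rpow_pos_of_pos two_pos _).le

lemma natCast_le_aseq : ∀ n : ℕ, (n : ℝ) ≤ aseq n
  | 0 => by simp [aseq]
  | n + 1 => calc
      ((n + 1 : ℕ) : ℝ) ≤ 2 ^ n := by exact_mod_cast Nat.lt_two_pow_self
      _ = 2 ^ (n : ℝ) := (rpow_natCast 2 n).symm
      _ ≤ aseq (n + 1) := rpow_le_rpow_of_exponent_le one_le_two (natCast_le_aseq n)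

lemma tendsto_aseq_atTop : Tendsto aseq atTop atTop :=
  tendsto_atTop_mono natCast_le_aseq tendsto_natCast_atTop_atTop

lemma anomDensity_of_neg {α₁ α₂ x : ℝ} (hx : x < 0) : anomDensity α₁ α₂ x = 0 := by
  simp [anomDensity, hx]

lemma anomDensity_of_mem_Ico {α₁ α₂ x : ℝ} {n : ℕ}
    (hx : x ∈ Ico (aseq (2 * n)) (aseq (2 * n + 1))) :
    anomDensity α₁ α₂ x = exp (-α₂ * x) := by
  have hx0 : ¬ x < 0 := not_lt.2 ((aseq_nonneg _).trans hx.1)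
  rw [anomDensity, if_neg hx0, if_pos ⟨n, hx⟩]

lemma anomDensity_nonneg (α₁ α₂ x : ℝ) : 0 ≤ anomDensity α₁ α₂ x := by
  unfold anomDensity
  split_ifs <;> positivity

lemma anomDensity_le_exp {α₁ α₂ : ℝ} (h₁₂ : α₁ ≤ α₂) (x : ℝ) :
    anomDensity α₁ α₂ x ≤ exp (-α₁ * x) := by
  unfold anomDensity
  split_ifs with hx
  · positivity
  · exact exp_le_exp.2 (by nlinarith)
  · exact le_rfl

lemma measurable_anomDensity (α₁ α₂ : ℝ) : Measurable (anomDensity α₁ α₂) := by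
  have hset : {x : ℝ | ∃ n : ℕ, aseq (2 * n) ≤ x ∧ x < aseq (2 * n + 1)} =
      ⋃ n : ℕ, Ico (aseq (2 * n)) (aseq (2 * n + 1)) := by
    ext; simp
  refine Measurable.ite measurableSet_Iio measurable_const
    (Measurable.ite ?_ (by fun_prop) (by fun_prop))
  rw [hset]
  exact .iUnion fun _ => measurableSet_Ico

lemma lintegral_Ici_exp_mul {b : ℝ} (hb : b < 0) (c : ℝ) :
    ∫⁻ x in Ici c, ENNReal.ofReal (exp (b * x)) = ENNReal.ofReal (exp (b * c) / -b) := by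
  rw [← setLIntegral_congr Ioi_ae_eq_Ici, ← ofReal_integral_eq_lintegral_ofReal
    (integrableOn_exp_mul_Ioi hb c) (ae_of_all _ fun _ => (exp_pos _).le),
    integral_exp_mul_Ioi hb, neg_div, div_neg]

lemma withDensity_anomDensity_Ici_le {α₁ α₂ c₃ : ℝ} (h₁ : 0 < α₁) (h₁₂ : α₁ ≤ α₂) (hc₃ : 0 ≤ c₃)
    (T : ℝ) :
    volume.withDensity (fun x => ENNReal.ofReal (c₃ * anomDensity α₁ α₂ x)) (Ici T) ≤
      ENNReal.ofReal (c₃ / α₁ * exp (-α₁ * T)) := by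
  rw [withDensity_apply _ measurableSet_Ici]
  calc ∫⁻ x in Ici T, ENNReal.ofReal (c₃ * anomDensity α₁ α₂ x)
      ≤ ∫⁻ x in Ici T, ENNReal.ofReal c₃ * ENNReal.ofReal (exp (-α₁ * x)) :=
        setLIntegral_mono (by fun_prop) fun x _ => by
          rw [← ENNReal.ofReal_mul hc₃]
          exact ENNReal.ofReal_le_ofReal
            (mul_le_mul_of_nonneg_left (anomDensity_le_exp h₁₂ x) hc₃)
    _ = ENNReal.ofReal (c₃ / α₁ * exp (-α₁ * T)) := by
        rw [lintegral_const_mul _ (by fun_prop), lintegral_Ici_exp_mul (by linarith),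
          ← ENNReal.ofReal_mul hc₃, neg_neg, mul_div_assoc', div_mul_eq_mul_div]

lemma ofReal_anomDensity_mul_exp_le {α₁ α₂ c₃ t x : ℝ} (h₁ : 0 ≤ α₁) (h₁₂ : α₁ ≤ α₂)
    (hc₃ : 0 ≤ c₃) (ht : 0 ≤ t) {n : ℕ} (hx : x < aseq (2 * n + 1)) :
    ENNReal.ofReal (c₃ * anomDensity α₁ α₂ x) * ENNReal.ofReal (exp (t * x)) ≤
      (Ico 0 (aseq (2 * n))).indicator (fun _ => ENNReal.ofReal (c₃ * exp (t * aseq (2 * n)))) x +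
      (Ici (aseq (2 * n))).indicator
        (fun y => ENNReal.ofReal (c₃ * exp ((t - α₂) * y))) x := by
  rw [← ENNReal.ofReal_mul (mul_nonneg hc₃ (anomDensity_nonneg _ _ _)), mul_assoc]
  rcases lt_or_ge x 0 with hx0 | hx0
  · simp [anomDensity_of_neg hx0]
  rcases lt_or_ge x (aseq (2 * n)) with hxa | hxa
  · rw [indicator_of_mem (show x ∈ Ico _ _ from ⟨hx0, hxa⟩),
      indicator_of_notMem (by simpa using hxa), add_zero]
    have hf : anomDensity α₁ α₂ x ≤ 1 :=
      (anomDensity_le_exp h₁₂ x).trans (exp_le_one_iff.2 (by nlinarith))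
    have he : exp (t * x) ≤ exp (t * aseq (2 * n)) := exp_le_exp.2 (by nlinarith)
    refine ENNReal.ofReal_le_ofReal (mul_le_mul_of_nonneg_left ?_ hc₃)
    nlinarith [anomDensity_nonneg α₁ α₂ x, exp_pos (t * x)]
  · rw [indicator_of_notMem (fun h => (not_lt.2 hxa) h.2), indicator_of_mem (mem_Ici.2 hxa),
      zero_add, anomDensity_of_mem_Ico ⟨hxa, hx⟩, ← exp_add]
    exact le_of_eq (by ring_nf)

lemma setLIntegral_Iio_exp_withDensity_anomDensity_le {α₁ α₂ c₃ t : ℝ} (h₁ : 0 ≤ α₁)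
    (h₁₂ : α₁ ≤ α₂) (hc₃ : 0 ≤ c₃) (ht : 0 ≤ t) (htα₂ : t < α₂) (n : ℕ) :
    ∫⁻ x in Iio (aseq (2 * n + 1)), ENNReal.ofReal (exp (t * x))
        ∂volume.withDensity (fun x => ENNReal.ofReal (c₃ * anomDensity α₁ α₂ x)) ≤
      ENNReal.ofReal (c₃ * (aseq (2 * n) * exp (t * aseq (2 * n)) + 1 / (α₂ - t))) := by
  set a := aseq (2 * n)
  have hdens : Measurable fun x => ENNReal.ofReal (c₃ * anomDensity α₁ α₂ x) :=
    ENNReal.measurable_ofReal.comp ((measurable_anomDensity α₁ α₂).const_mul c₃)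
  have hgap : t - α₂ < 0 := by linarith
  rw [setLIntegral_withDensity_eq_setLIntegral_mul _ hdens (by fun_prop) measurableSet_Iio]
  calc _ ≤ ∫⁻ x in Iio (aseq (2 * n + 1)),
          (Ico 0 a).indicator (fun _ => ENNReal.ofReal (c₃ * exp (t * a))) x +
          (Ici a).indicator (fun y => ENNReal.ofReal (c₃ * exp ((t - α₂) * y))) x :=
        setLIntegral_mono' measurableSet_Iio fun x hx =>
          ofReal_anomDensity_mul_exp_le h₁ h₁₂ hc₃ ht hx
    _ ≤ ∫⁻ x, (Ico 0 a).indicator (fun _ => ENNReal.ofReal (c₃ * exp (t * a))) x +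
          (Ici a).indicator (fun y => ENNReal.ofReal (c₃ * exp ((t - α₂) * y))) x :=
        setLIntegral_le_lintegral _ _
    _ = ENNReal.ofReal (c₃ * exp (t * a)) * ENNReal.ofReal a +
          ENNReal.ofReal c₃ * ENNReal.ofReal (exp ((t - α₂) * a) / -(t - α₂)) := by
        simp_rw [ENNReal.ofReal_mul hc₃]
        rw [lintegral_add_left (measurable_const.indicator measurableSet_Ico),
          lintegral_indicator measurableSet_Ico, lintegral_indicator measurableSet_Ici,
          setLIntegral_const, Real.volume_Ico, sub_zero, lintegral_const_mul _ (by fun_prop),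
          lintegral_Ici_exp_mul hgap, ← ENNReal.ofReal_mul hc₃]
    _ ≤ ENNReal.ofReal (c₃ * (a * exp (t * a) + 1 / (α₂ - t))) := by
        have ha : 0 ≤ a := aseq_nonneg _
        have hc₃e : 0 ≤ c₃ * exp (t * a) := mul_nonneg hc₃ (exp_pos _).le
        rw [← ENNReal.ofReal_mul hc₃e, ← ENNReal.ofReal_mul hc₃, ← ENNReal.ofReal_add
          (mul_nonneg hc₃e ha) (mul_nonneg hc₃ (div_nonneg (exp_pos _).le (by linarith)))]
        refine ENNReal.ofReal_le_ofReal ?_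
        have hexp : exp ((t - α₂) * a) ≤ 1 := exp_le_one_iff.2 (by nlinarith)
        calc c₃ * exp (t * a) * a + c₃ * (exp ((t - α₂) * a) / -(t - α₂))
            = c₃ * (a * exp (t * a) + exp ((t - α₂) * a) / (α₂ - t)) := by rw [neg_sub]; ring
          _ ≤ c₃ * (a * exp (t * a) + 1 / (α₂ - t)) := by gcongr

open ProbabilityTheory in
lemma measure_lt_sum_le_truncated_chernoff {Ω ι : Type*} [MeasurableSpace Ω] {μ : Measure Ω}
    [Fintype ι] {X : ι → Ω → ℝ} (hX : ∀ i, Measurable (X i)) (hindep : iIndepFun X μ)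
    {ν : Measure ℝ} (hlaw : ∀ i, μ.map (X i) = ν) {t : ℝ} (ht : 0 ≤ t) (s T : ℝ) :
    μ {ω | s < ∑ i, X i ω} ≤ Fintype.card ι * ν (Ici T) +
      ENNReal.ofReal (exp (-t * s)) *
        (∫⁻ x in Iio T, ENNReal.ofReal (exp (t * x)) ∂ν) ^ Fintype.card ι := by
  set g : ℝ → ℝ≥0∞ := (Iio T).indicator fun x => ENNReal.ofReal (exp (t * x))
  have hg : Measurable g := Measurable.indicator (by fun_prop) measurableSet_Iio
  have hsub : {ω | s < ∑ i, X i ω} ⊆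
      (⋃ i, X i ⁻¹' Ici T) ∪ {ω | ENNReal.ofReal (exp (t * s)) ≤ ∏ i, g (X i ω)} := by
    intro ω hω
    by_cases hlt : ∀ i, X i ω < T
    · have hprod : ∏ i, g (X i ω) = ENNReal.ofReal (exp (t * ∑ i, X i ω)) := by
        rw [Finset.mul_sum, exp_sum, ENNReal.ofReal_prod_of_nonneg fun i _ => (exp_pos _).le]
        exact Finset.prod_congr rfl fun i _ => indicator_of_mem (mem_Iio.2 (hlt i)) _
      refine Or.inr ?_
      rw [mem_ofPred_eq, hprod]
      exact ENNReal.ofReal_le_ofReal (exp_le_exp.2 (mul_le_mul_of_nonneg_left (le_of_lt hω) ht))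
    · obtain ⟨i, hi⟩ := not_forall.1 hlt
      exact Or.inl (mem_iUnion.2 ⟨i, not_lt.1 hi⟩)
  have htail : ∀ i, μ (X i ⁻¹' Ici T) = ν (Ici T) := fun i => by
    rw [← hlaw i, Measure.map_apply (hX i) measurableSet_Ici]
  have hmgf : ∀ i, ∫⁻ ω, g (X i ω) ∂μ = ∫⁻ x in Iio T, ENNReal.ofReal (exp (t * x)) ∂ν :=
    fun i => by rw [← lintegral_map hg (hX i), hlaw i, lintegral_indicator measurableSet_Iio]
  calc μ {ω | s < ∑ i, X i ω}
      ≤ μ (⋃ i, X i ⁻¹' Ici T) + μ {ω | ENNReal.ofReal (exp (t * s)) ≤ ∏ i, g (X i ω)} :=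
        (measure_mono hsub).trans (measure_union_le _ _)
    _ ≤ ∑ i, μ (X i ⁻¹' Ici T) + (∫⁻ ω, ∏ i, g (X i ω) ∂μ) / ENNReal.ofReal (exp (t * s)) :=
        add_le_add (measure_iUnion_fintype_le _ _) (meas_ge_le_lintegral_div
          (Finset.measurable_prod _ fun i _ => hg.comp (hX i)).aemeasurable
          (by simpa using exp_pos _) ENNReal.ofReal_ne_top)
    _ = _ := by
        rw [lintegral_prod_eq_prod_lintegral_of_indepFun _ (fun i ω => g (X i ω))
          (hindep.comp _ fun _ => hg) fun i => hg.comp (hX i)]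
        simp only [htail, hmgf, Finset.sum_const, Finset.prod_const, Finset.card_univ,
          nsmul_eq_mul, neg_mul, exp_neg, ENNReal.ofReal_inv_of_pos (exp_pos _), div_eq_mul_inv]
        ring

lemma tendsto_exp_mul_sq_sub_two_rpow {b : ℝ} (hb : 0 < b) (D : ℝ) :
    Tendsto (fun a : ℝ => exp (D * a ^ 2 - b * 2 ^ a)) atTop (𝓝 0) := by
  have hsq : ∀ᶠ a : ℝ in atTop, ‖a ^ 2‖ ≤ b / (2 * (|D| + 1)) * ‖(2 : ℝ) ^ a‖ := by
    simpa only [← rpow_def_of_pos two_pos] using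
      (isLittleO_pow_exp_pos_mul_atTop 2 (log_pos one_lt_two)).bound (by positivity)
  refine tendsto_exp_atBot.comp (tendsto_atBot_mono' _ ?_ (tendsto_neg_atTop_atBot.comp
    ((tendsto_rpow_atTop_of_base_gt_one 2 one_lt_two).const_mul_atTop (half_pos hb))))
  filter_upwards [hsq] with a ha
  rw [norm_pow, Real.norm_eq_abs, sq_abs, Real.norm_of_nonneg (rpow_pos_of_pos two_pos a).le] at ha
  have hD : |D| * (b / (2 * (|D| + 1))) ≤ b / 2 := by
    rw [mul_div_assoc', div_le_div_iff₀ (by positivity) two_pos]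
    nlinarith [abs_nonneg D]
  have h2a := rpow_pos_of_pos two_pos a
  simp only [Function.comp_apply]
  nlinarith [le_abs_self D, mul_le_mul_of_nonneg_left ha (abs_nonneg D), sq_nonneg a]

lemma tendsto_pow_mul_exp_neg_mul_sq {δ : ℝ} (hδ : 0 < δ) (C L : ℝ) (k : ℕ) :
    Tendsto (fun a : ℝ => (C * exp (L * a)) ^ k * exp (-(δ * a ^ 2))) atTop (𝓝 0) := by
  have hquad : Tendsto (fun a : ℝ => k * L * a - δ * a ^ 2) atTop atBot := by
    have := (tendsto_atTop_add_const_right _ (-(k * L))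
      (tendsto_id.const_mul_atTop hδ)).atTop_mul_atTop₀ tendsto_id
    refine (tendsto_neg_atTop_atBot.comp this).congr fun a => ?_
    simp only [Function.comp_apply, id]
    ring
  have hlim := (tendsto_exp_atBot.comp hquad).const_mul (C ^ k)
  rw [mul_zero] at hlim
  refine hlim.congr fun a => ?_
  rw [Function.comp_apply, mul_pow, ← exp_nat_mul, mul_assoc (C ^ k), ← exp_add]
  ring_nf

lemma eventually_tail_add_chernoff_le_exp {α₁ t r q K C D : ℝ} (h₁ : 0 < α₁) (ht : 0 ≤ t)
    (hrt : r < t) (hq : 0 < q) (hC : 0 ≤ C) (hD : 0 ≤ D) (k : ℕ) :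
    ∀ᶠ a : ℝ in atTop, k * (K * exp (-α₁ * 2 ^ a)) +
      exp (-t * (q * a ^ 2)) * (C * (a * exp (t * a) + D)) ^ k ≤ exp (-r * (q * a ^ 2)) := by
  have htail : Tendsto (fun a : ℝ => k * (K * exp (-α₁ * 2 ^ a)) * exp (r * (q * a ^ 2)))
      atTop (𝓝 0) := by
    have hlim := (tendsto_exp_mul_sq_sub_two_rpow h₁ (r * q)).const_mul (k * K)
    rw [mul_zero] at hlim
    refine hlim.congr fun a => ?_
    rw [show r * q * a ^ 2 - α₁ * 2 ^ a = -α₁ * 2 ^ a + r * (q * a ^ 2) by ring, exp_add]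
    ring
  have hchernoff : Tendsto (fun a : ℝ => exp (-t * (q * a ^ 2)) *
      (C * (a * exp (t * a) + D)) ^ k * exp (r * (q * a ^ 2))) atTop (𝓝 0) := by
    refine squeeze_zero' ?_ ?_ (tendsto_pow_mul_exp_neg_mul_sq (mul_pos (sub_pos.2 hrt) hq)
      (C * (1 + D)) (t + 1) k)
    · filter_upwards [eventually_ge_atTop 0] with a ha
      positivity
    filter_upwards [eventually_ge_atTop 0] with a ha
    have hM : C * (a * exp (t * a) + D) ≤ C * (1 + D) * exp ((t + 1) * a) := by
      have h1 : a * exp (t * a) ≤ exp ((t + 1) * a) := by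
        rw [add_mul, one_mul, exp_add, mul_comm a]
        exact mul_le_mul_of_nonneg_left ((le_add_of_nonneg_right zero_le_one).trans
          (add_one_le_exp a)) (exp_pos _).le
      have h2 : D ≤ D * exp ((t + 1) * a) :=
        le_mul_of_one_le_right hD (one_le_exp (by positivity))
      rw [mul_assoc]
      gcongr
      linarith
    calc exp (-t * (q * a ^ 2)) * (C * (a * exp (t * a) + D)) ^ k * exp (r * (q * a ^ 2))
        = (C * (a * exp (t * a) + D)) ^ k * exp (-((t - r) * q * a ^ 2)) := by
          rw [mul_comm (exp _), mul_assoc, ← exp_add]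
          ring_nf
      _ ≤ (C * (1 + D) * exp ((t + 1) * a)) ^ k * exp (-((t - r) * q * a ^ 2)) := by
          gcongr
  filter_upwards [(htail.add hchernoff).eventually
    (gt_mem_nhds (show (0 : ℝ) + 0 < 1 by norm_num))] with a ha
  rw [← add_mul] at ha
  calc _ = (k * (K * exp (-α₁ * 2 ^ a)) + exp (-t * (q * a ^ 2)) *
        (C * (a * exp (t * a) + D)) ^ k) * exp (r * (q * a ^ 2)) * exp (-r * (q * a ^ 2)) := by
        rw [mul_assoc, ← exp_add, ← add_mul, add_neg_cancel, zero_mul, exp_zero, mul_one]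
    _ ≤ exp (-r * (q * a ^ 2)) := mul_le_of_le_one_left (exp_pos _).le ha.le

open ProbabilityTheory in
lemma measure_lt_sum_le_of_anomDensity {Ω : Type*} [MeasurableSpace Ω] {μ : Measure Ω}
    {α₁ α₂ c₃ t : ℝ} (h₁ : 0 < α₁) (h₁₂ : α₁ ≤ α₂) (hc₃ : 0 ≤ c₃) (ht : 0 ≤ t) (htα₂ : t < α₂)
    {k : ℕ} {X : Fin k → Ω → ℝ} (hmeas : ∀ i, Measurable (X i)) (hindep : iIndepFun X μ)
    (hmap : ∀ i, Measure.map (X i) μ =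
      volume.withDensity (fun x => ENNReal.ofReal (c₃ * anomDensity α₁ α₂ x)))
    (s : ℝ) (n : ℕ) :
    μ {ω | s < ∑ i, X i ω} ≤ ENNReal.ofReal (k * (c₃ / α₁ * exp (-α₁ * 2 ^ aseq (2 * n))) +
      exp (-t * s) * (c₃ * (aseq (2 * n) * exp (t * aseq (2 * n)) + 1 / (α₂ - t))) ^ k) := by
  have htail : 0 ≤ c₃ / α₁ * exp (-α₁ * 2 ^ aseq (2 * n)) :=
    mul_nonneg (div_nonneg hc₃ h₁.le) (exp_pos _).le
  have hmgf : 0 ≤ c₃ * (aseq (2 * n) * exp (t * aseq (2 * n)) + 1 / (α₂ - t)) :=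
    mul_nonneg hc₃ (add_nonneg (mul_nonneg (aseq_nonneg _) (exp_pos _).le)
      (one_div_nonneg.2 (sub_nonneg.2 htα₂.le)))
  refine (measure_lt_sum_le_truncated_chernoff hmeas hindep hmap ht s
    (aseq (2 * n + 1))).trans ?_
  rw [ENNReal.ofReal_add (by positivity) (by positivity), ENNReal.ofReal_mul (Nat.cast_nonneg _),
    ENNReal.ofReal_natCast, ENNReal.ofReal_mul (exp_pos _).le, ENNReal.ofReal_pow hmgf,
    Fintype.card_fin, ← aseq_succ]
  gcongr
  · exact withDensity_anomDensity_Ici_le h₁ h₁₂ hc₃ _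
  · exact setLIntegral_Iio_exp_withDensity_anomDensity_le h₁.le h₁₂ hc₃ ht htα₂ n

open ProbabilityTheory in
theorem anom_sum_subseq_ldp_general {Ω : Type*} [MeasurableSpace Ω]
    (μ : Measure Ω) [IsProbabilityMeasure μ]
    (α₁ α₂ c₃ : ℝ) (h₁ : 0 < α₁) (h₁₂ : α₁ < α₂) (hc₃ : 0 < c₃)
    (k : ℕ) (X : Fin k → Ω → ℝ) (hmeas : ∀ i, Measurable (X i))
    (hindep : iIndepFun X μ)
    (hmap : ∀ i, Measure.map (X i) μ =
      volume.withDensity (fun x => ENNReal.ofReal (c₃ * anomDensity α₁ α₂ x)))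
    (c ξ ε : ℝ) (hc : 0 < c) (hεξ : ε < ξ) :
    ∃ n₀ : ℕ, ∀ n : ℕ, n₀ ≤ n →
      (μ {ω | (ξ - ε) * aseq (2 * n) ^ 2 < ∑ i, X i ω}).toReal ≤
        Real.exp (-(1 - c) * α₂ * ((ξ - ε) * aseq (2 * n) ^ 2)) := by
  obtain ⟨t, hlt, htα₂⟩ : ∃ t, max 0 ((1 - c) * α₂) < t ∧ t < α₂ :=
    exists_between (max_lt (h₁.trans h₁₂) (by nlinarith))
  have ht : 0 ≤ t := (le_max_left _ _).trans hlt.le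
  have hbound := eventually_tail_add_chernoff_le_exp (K := c₃ / α₁) (D := 1 / (α₂ - t)) h₁ ht
    ((le_max_right _ _).trans_lt hlt) (sub_pos.2 hεξ) hc₃.le (one_div_pos.2 (sub_pos.2 htα₂)).le k
  obtain ⟨n₀, hn₀⟩ := eventually_atTop.1 <|
    (tendsto_aseq_atTop.comp (tendsto_id.const_mul_atTop' two_pos)).eventually hbound
  refine ⟨n₀, fun n hn => ENNReal.toReal_le_of_le_ofReal (exp_pos _).le <|
    (measure_lt_sum_le_of_anomDensity h₁ h₁₂.le hc₃.le ht htα₂ hmeas hindep hmap _ n).trans <|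
      ENNReal.ofReal_le_ofReal ?_⟩
  simpa only [Function.comp_apply, id, neg_mul] using hn₀ n hn

open ProbabilityTheory in
theorem anom_sum_subseq_ldp {Ω : Type*} [MeasurableSpace Ω]
    (μ : Measure Ω) [IsProbabilityMeasure μ]
    (α₁ α₂ c₃ : ℝ) (h₁ : 0 < α₁) (h₁₂ : α₁ < α₂) (hc₃ : 0 < c₃)
    (hnorm : ∫ x in Set.Ici (0 : ℝ), c₃ * anomDensity α₁ α₂ x = 1)
    (k : ℕ) (hk : 0 < k) (X : Fin k → Ω → ℝ) (hmeas : ∀ i, Measurable (X i))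
    (hindep : iIndepFun X μ)
    (hmap : ∀ i, Measure.map (X i) μ =
      volume.withDensity (fun x => ENNReal.ofReal (c₃ * anomDensity α₁ α₂ x)))
    (c ξ ε : ℝ) (hc : 0 < c) (hε : 0 < ε) (hεξ : ε < ξ) :
    ∃ n₀ : ℕ, ∀ n : ℕ, n₀ ≤ n →
      (μ {ω | (ξ - ε) * aseq (2 * n) ^ 2 < ∑ i, X i ω}).toReal ≤
        Real.exp (-(1 - c) * α₂ * ((ξ - ε) * aseq (2 * n) ^ 2)) :=
  anom_sum_subseq_ldp_general μ α₁ α₂ c₃ h₁ h₁₂ hc₃ k X hmeas hindep hmap c ξ ε hc hεξ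
end

section
/- Let f : (0,∞) → (0,∞) be slowly varying, i.e. for all a > 0, lim_{t→∞} f(at)/f(t) = 1. Then for any constants 0 < λ < 1 and any C > 1, the convergence f(at)/f(t) → 1 holds uniformly in a ∈ [λ, C] (local uniform convergence of slowly varying functions). -/
/-!
With `h x = log (f (exp x))`, slow variation says `h (x + u) - h x → 0` for every `u`. If the
convergence failed to be uniform for `u` in a bounded set, there would be `x k → ∞` and bounded
`u k` with `|h (x k + u k) - h (x k)| ≥ ε`. Egorov's theorem, applied to the shifts of `h` along
`x k` and along `x k + u k`, gives two subsets of `[0, L]` of measure close to `L` on which these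
shifts are uniformly small; for `L` large a bounded translate of one meets the other, at some
`v ∈ E₁` with `v - u k ∈ E₂`, and then `h (x k + u k) - h (x k)` is the difference of two small
quantities.
-/

open Filter Set MeasureTheory Topology

section Additive

variable {h : ℝ → ℝ}

theorem exists_large_set_tendstoUniformlyOn_sub (hm : Measurable h)
    (hh : ∀ u, Tendsto (fun x => h (x + u) - h x) atTop (𝓝 0))
    {y : ℕ → ℝ} (hy : Tendsto y atTop atTop) (L : ℝ) {η : ℝ} (hη : 0 < η) :
    ∃ E ⊆ Icc 0 L, MeasurableSet E ∧ ENNReal.ofReal (L - η) ≤ volume E ∧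
      TendstoUniformlyOn (fun k v => h (y k + v) - h (y k)) (fun _ => 0) atTop E := by
  obtain ⟨t, -, htm, htη, hunif⟩ := tendstoUniformlyOn_of_ae_tendsto (μ := volume)
    (fun k => ((hm.comp (measurable_const_add (y k))).sub_const (h (y k))).stronglyMeasurable)
    stronglyMeasurable_const measurableSet_Icc (by simp)
    (ae_of_all _ fun v _ => (hh v).comp hy) hη
  refine ⟨Icc 0 L \ t, sdiff_subset, measurableSet_Icc.diff htm, ?_, hunif⟩
  calc ENNReal.ofReal (L - η) = volume (Icc 0 L) - ENNReal.ofReal η := by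
        rw [Real.volume_Icc, sub_zero, ENNReal.ofReal_sub _ hη.le]
    _ ≤ volume (Icc 0 L) - volume t := by gcongr
    _ ≤ volume (Icc 0 L \ t) := le_measure_sdiff

theorem exists_mem_sub_mem_of_lt_volume_add {s t : Set ℝ} {L r u : ℝ} (hs : s ⊆ Icc 0 L)
    (ht : t ⊆ Icc 0 L) (htm : MeasurableSet t)
    (hvol : ENNReal.ofReal (L + 2 * r) < volume s + volume t) (hu : |u| ≤ r) :
    ∃ v ∈ s, v - u ∈ t := by
  obtain ⟨hu₁, hu₂⟩ := abs_le.1 hu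
  have hs' : s ⊆ Icc (-r) (L + r) := hs.trans (Icc_subset_Icc (by linarith) (by linarith))
  have ht' : (· - u) ⁻¹' t ⊆ Icc (-r) (L + r) := fun v hv => by
    obtain ⟨hv₁, hv₂⟩ := ht hv
    exact ⟨by linarith, by linarith⟩
  have hvol' : volume (Icc (-r) (L + r)) < volume s + volume ((· - u) ⁻¹' t) := by
    rw [Real.volume_Icc,
      (measurePreserving_sub_right volume u).measure_preimage htm.nullMeasurableSet]
    convert hvol using 2
    ring
  exact nonempty_inter_of_measure_lt_add volume (htm.preimage (measurable_sub_const u))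
    hs' ht' hvol'

theorem abs_sub_lt_of_forall_mem_lt {E₁ E₂ : Set ℝ} {L r y u δ : ℝ} (hE₁ : E₁ ⊆ Icc 0 L)
    (hE₂ : E₂ ⊆ Icc 0 L) (hE₂m : MeasurableSet E₂)
    (hvol : ENNReal.ofReal (L + 2 * r) < volume E₁ + volume E₂) (hu : |u| ≤ r)
    (h₁ : ∀ v ∈ E₁, |h (y + v) - h y| < δ) (h₂ : ∀ v ∈ E₂, |h (y + u + v) - h (y + u)| < δ) :
    |h (y + u) - h y| < 2 * δ := by
  obtain ⟨v, hv₁, hv₂⟩ := exists_mem_sub_mem_of_lt_volume_add hE₁ hE₂ hE₂m hvol hu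
  have hsplit : h (y + u) - h y = (h (y + v) - h y) - (h (y + u + (v - u)) - h (y + u)) := by
    rw [show y + u + (v - u) = y + v by ring]
    ring
  calc |h (y + u) - h y| ≤ |h (y + v) - h y| + |h (y + u + (v - u)) - h (y + u)| := by
        rw [hsplit]; exact abs_sub _ _
    _ < δ + δ := add_lt_add (h₁ v hv₁) (h₂ _ hv₂)
    _ = 2 * δ := (two_mul δ).symm

theorem tendstoUniformlyOn_sub_of_tendsto_sub (hm : Measurable h)
    (hh : ∀ u, Tendsto (fun x => h (x + u) - h x) atTop (𝓝 0)) {s : Set ℝ}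
    (hs : Bornology.IsBounded s) :
    TendstoUniformlyOn (fun x u => h (x + u) - h x) (fun _ => 0) atTop s := by
  obtain ⟨r, hsr⟩ := (Metric.isBounded_iff_subset_closedBall 0).1 hs
  simp only [Metric.tendstoUniformlyOn_iff, dist_zero_left, Real.norm_eq_abs]
  intro ε hε
  by_contra hbad
  obtain ⟨x, hx, hbad⟩ := exists_seq_forall_of_frequently (not_eventually.1 hbad)
  simp only [not_forall, not_lt, exists_prop] at hbad
  choose u hus hu using hbad
  have hur : ∀ k, |u k| ≤ r := fun k => by simpa [Real.dist_eq] using hsr (hus k)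
  have hr : 0 ≤ r := (abs_nonneg _).trans (hur 0)
  have hxu : Tendsto (fun k => x k + u k) atTop atTop :=
    tendsto_atTop_mono (fun k => by linarith [(abs_le.1 (hur k)).1])
      (tendsto_atTop_add_const_right _ (-r) hx)
  obtain ⟨E₁, hE₁, -, hvol₁, hunif₁⟩ :=
    exists_large_set_tendstoUniformlyOn_sub hm hh hx (2 * r + 3) one_pos
  obtain ⟨E₂, hE₂, hE₂m, hvol₂, hunif₂⟩ :=
    exists_large_set_tendstoUniformlyOn_sub hm hh hxu (2 * r + 3) one_pos
  have hvol : ENNReal.ofReal (2 * r + 3 + 2 * r) < volume E₁ + volume E₂ := by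
    refine lt_of_lt_of_le ?_ (add_le_add hvol₁ hvol₂)
    rw [← ENNReal.ofReal_add (by linarith) (by linarith),
      ENNReal.ofReal_lt_ofReal_iff (by linarith)]
    linarith
  simp only [Metric.tendstoUniformlyOn_iff, dist_zero_left, Real.norm_eq_abs] at hunif₁ hunif₂
  obtain ⟨k, hk₁, hk₂⟩ :=
    ((hunif₁ (ε / 2) (half_pos hε)).and (hunif₂ (ε / 2) (half_pos hε))).exists
  have := abs_sub_lt_of_forall_mem_lt hE₁ hE₂ hE₂m hvol (hur k) hk₁ hk₂
  linarith [hu k]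

end Additive

open Real in
theorem tendsto_log_comp_exp_add_sub {f : ℝ → ℝ} (hpos : ∀ t > 0, 0 < f t)
    (hsv : ∀ a > 0, Tendsto (fun t => f (a * t) / f t) atTop (𝓝 1)) (u : ℝ) :
    Tendsto (fun x => log (f (exp (x + u))) - log (f (exp x))) atTop (𝓝 0) := by
  have hlog := ((continuousAt_log one_ne_zero).tendsto.comp
    ((hsv _ (exp_pos u)).comp tendsto_exp_atTop))
  rw [log_one] at hlog
  refine hlog.congr fun x => ?_
  simp only [Function.comp_apply]
  rw [exp_add, mul_comm, log_div (hpos _ (by positivity)).ne' (hpos _ (exp_pos x)).ne']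

open Real in
theorem slowly_varying_locally_uniform_general (f : ℝ → ℝ) (hf : Measurable f)
    (hpos : ∀ t > 0, 0 < f t)
    (hsv : ∀ a > 0, Tendsto (fun t => f (a * t) / f t) atTop (nhds 1))
    (lam C : ℝ) (hlam0 : 0 < lam) :
    TendstoUniformlyOn (fun t a => f (a * t) / f t) (fun _ => 1) atTop
      (Set.Icc lam C) := by
  have hadd := tendstoUniformlyOn_sub_of_tendsto_sub
    (measurable_log.comp (hf.comp measurable_exp)) (tendsto_log_comp_exp_add_sub hpos hsv)
    (Metric.isBounded_Icc (log lam) (log C))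
  have hlog : Tendsto (fun p : ℝ × ℝ => (log p.1, log p.2)) (atTop ×ˢ 𝓟 (Icc lam C))
      (atTop ×ˢ 𝓟 (Icc (log lam) (log C))) :=
    tendsto_log_atTop.prodMap <| tendsto_principal_principal.2 fun a ha =>
      ⟨log_le_log hlam0 ha.1, log_le_log (hlam0.trans_le ha.1) ha.2⟩
  rw [← tendsto_prod_principal_iff] at hadd ⊢
  have hexp := (continuous_exp.tendsto 0).comp (hadd.comp hlog)
  rw [exp_zero] at hexp
  refine hexp.congr' ?_
  filter_upwards [prod_mem_prod (eventually_gt_atTop 0) (mem_principal_self _)]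
    with ⟨t, a⟩ ⟨ht, ha⟩
  have ha0 : 0 < a := hlam0.trans_le ha.1
  change exp (log (f (exp (log t + log a))) - log (f (exp (log t)))) = f (a * t) / f t
  rw [exp_sub, exp_add, exp_log ht, exp_log ha0, mul_comm, exp_log (hpos _ (mul_pos ha0 ht)),
    exp_log (hpos _ ht)]

theorem slowly_varying_locally_uniform (f : ℝ → ℝ) (hf : Measurable f)
    (hpos : ∀ t > 0, 0 < f t)
    (hsv : ∀ a > 0, Tendsto (fun t => f (a * t) / f t) atTop (nhds 1))
    (lam C : ℝ) (hlam0 : 0 < lam) (hlam1 : lam < 1) (hC : 1 < C) :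
    TendstoUniformlyOn (fun t a => f (a * t) / f t) (fun _ => 1) atTop
      (Set.Icc lam C) :=
  slowly_varying_locally_uniform_general f hf hpos hsv lam C hlam0
end

section
/- Consider first passage percolation on ℤ^d (d ≥ 2) with i.i.d. nonnegative edge weights τ_e satisfying P(τ_e = 0) < p_c(d) and c₁ exp(−α t^r) ≤ P(τ_e > t) ≤ c₂ exp(−α t^r) for large t (c₁, c₂, α > 0, 0 < r ≤ 1). Let μ = μ(e₁) be the time constant. Then for any ξ > 0, liminf_{n→∞} n^{−r} log P(T(0, n e₁) > (μ + ξ) n) ≥ −2dα ξ^r. -/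
open MeasureTheory ProbabilityTheory Filter

/-- Vertices of the lattice `ℤ^d`. -/
abbrev Vert (d : ℕ) := Fin d → ℤ

/-- Nearest-neighbor adjacency on `ℤ^d`. -/
def adj {d : ℕ} (x y : Vert d) : Prop := ∑ i, (x i - y i).natAbs = 1

lemma adj_symm {d : ℕ} : Symmetric (@adj d) := by
  intro x y h
  unfold adj at *
  rw [Finset.sum_congr rfl fun i _ => ?_]
  · exact h
  · omega

/-- The set of nearest-neighbor edges of `ℤ^d`, as unordered pairs. -/
def EdgeSet (d : ℕ) : Set (Sym2 (Vert d)) := Sym2.fromRel (⟨fun _ _ h => @adj_symm d _ _ h⟩ : Std.Symm (@adj d))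

/-- The passage time of a path (a list of vertices), given edge weights `τ`. -/
def pathTime {d : ℕ} (τ : Sym2 (Vert d) → ℝ) (γ : List (Vert d)) : ℝ :=
  ((γ.zip γ.tail).map fun p => τ s(p.1, p.2)).sum

/-- `IsPathFrom γ x y` means `γ` is a nearest-neighbor lattice path from `x` to `y`. -/
def IsPathFrom {d : ℕ} (γ : List (Vert d)) (x y : Vert d) : Prop :=
  γ.Chain' adj ∧ γ.head? = some x ∧ γ.getLast? = some y

/-- The first passage time between `x` and `y`. -/
noncomputable def fpt {d : ℕ} (τ : Sym2 (Vert d) → ℝ) (x y : Vert d) : ℝ :=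
  sInf {t | ∃ γ : List (Vert d), IsPathFrom γ x y ∧ pathTime τ γ = t}

/-- The first passage time restricted to paths staying in the vertex set `D`. -/
noncomputable def fptRes {d : ℕ} (D : Set (Vert d)) (τ : Sym2 (Vert d) → ℝ)
    (x y : Vert d) : ℝ :=
  sInf {t | ∃ γ : List (Vert d), IsPathFrom γ x y ∧ (∀ v ∈ γ, v ∈ D) ∧ pathTime τ γ = t}

/-- The first passage time restricted to paths using only edges in `E`. -/
noncomputable def fptResE {d : ℕ} (E : Set (Sym2 (Vert d))) (τ : Sym2 (Vert d) → ℝ)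
    (x y : Vert d) : ℝ :=
  sInf {t | ∃ γ : List (Vert d), IsPathFrom γ x y ∧
    (∀ p ∈ γ.zip γ.tail, s(p.1, p.2) ∈ E) ∧ pathTime τ γ = t}

/-- A configuration of open/closed edges percolates if the open cluster of the
origin is infinite. -/
def Percolates {d : ℕ} (cfg : Sym2 (Vert d) → Bool) : Prop :=
  {v : Vert d | ∃ γ : List (Vert d),
    γ.Chain' (fun x y => adj x y ∧ cfg s(x, y) = true) ∧
    γ.head? = some 0 ∧ γ.getLast? = some v}.Infinite

/-- The critical probability `p_c(d)` of Bernoulli bond percolation on `ℤ^d`: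
the supremum of those `p ∈ [0,1]` such that any i.i.d. Bernoulli(`p`) family of
open/closed edges a.s. does not percolate. -/
noncomputable def pc (d : ℕ) : ℝ :=
  sSup {p : ℝ | 0 ≤ p ∧ p ≤ 1 ∧
    ∀ (Ω : Type) (_ : MeasurableSpace Ω) (P : Measure Ω), IsProbabilityMeasure P →
      ∀ η : Sym2 (Vert d) → Ω → Bool, (∀ e, Measurable (η e)) →
        iIndepFun (fun e : EdgeSet d => η e.1) P →
        (∀ e ∈ EdgeSet d, P {ω | η e ω = true} = ENNReal.ofReal p) →
        P {ω | Percolates fun e => η e ω} = 0}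

/-- The first coordinate unit vector in `ℤ^d`. -/
def unitVec (d : ℕ) : Vert d := fun i => if (i : ℕ) = 0 then 1 else 0

/-- The lattice point `n e₁`. -/
def axisPt (d : ℕ) (n : ℕ) : Vert d := fun i => if (i : ℕ) = 0 then (n : ℤ) else 0

/-!
Fix `θ > ξ`. With probability at least `(c₁ exp (-α (θ n) ^ r)) ^ (2 d)` all `2 d` edges at
the origin weigh more than `θ n`. Independently of this, since it only involves the other
edges, with probability tending to one every path from a neighbour of the origin to `n e₁`
avoiding the origin costs at least `(tc - ε) n`: prefixed by an edge at the origin such a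
path bounds `T(0, n e₁)`, and the weights at the origin are `o(n)`. On both events a path
from `0` to `n e₁` leaves the origin for the last time through a heavy edge, so it costs more
than `(tc + ξ) n` once `ε < θ - ξ`. Taking logarithms and letting `θ ↓ ξ` gives the bound.
-/

open Topology

lemma List.exists_eq_append_cons_notMem {α : Type*} {a : α} {l : List α} (h : a ∈ l) :
    ∃ s t, l = s ++ a :: t ∧ a ∉ t := by
  induction l with
  | nil => simp at h
  | cons b l ih =>
    by_cases hl : a ∈ l
    · obtain ⟨s, t, rfl, hat⟩ := ih hl
      exact ⟨b :: s, t, rfl, hat⟩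
    · obtain rfl : a = b := (List.mem_cons.1 h).resolve_right hl
      exact ⟨[], l, rfl, hl⟩

lemma List.IsChain.rel_of_mem_zip_tail {α : Type*} {R : α → α → Prop} {l : List α}
    (h : l.IsChain R) {p : α × α} (hp : p ∈ l.zip l.tail) : R p.1 p.2 := by
  induction l with
  | nil => simp at hp
  | cons x l ih =>
    rcases l with _ | ⟨y, l⟩
    · simp at hp
    · obtain ⟨hxy, hc⟩ := List.isChain_cons_cons.1 h
      rcases List.mem_cons.1 hp with rfl | hp
      · exact hxy
      · exact ih hc hp

section Paths

variable {d : ℕ} {τ : Sym2 (Vert d) → ℝ}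

lemma pathTime_nonneg (hτ : ∀ e, 0 ≤ τ e) (γ : List (Vert d)) : 0 ≤ pathTime τ γ :=
  List.sum_nonneg <| by
    simp only [List.mem_map]
    rintro _ ⟨p, -, rfl⟩
    exact hτ _

lemma pathTime_cons_cons (τ : Sym2 (Vert d) → ℝ) (x y : Vert d) (l : List (Vert d)) :
    pathTime τ (x :: y :: l) = τ s(x, y) + pathTime τ (y :: l) := by
  simp [pathTime]

lemma pathTime_le_append (hτ : ∀ e, 0 ≤ τ e) (σ δ : List (Vert d)) :
    pathTime τ δ ≤ pathTime τ (σ ++ δ) := by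
  induction σ with
  | nil => simp
  | cons x σ ih =>
    refine ih.trans ?_
    rw [List.cons_append]
    rcases σ ++ δ with _ | ⟨y, l⟩
    · simp [pathTime]
    · rw [pathTime_cons_cons]
      linarith [hτ s(x, y)]

lemma IsPathFrom.cons {γ : List (Vert d)} {x z y : Vert d} (hxz : adj x z)
    (hγ : IsPathFrom γ z y) : IsPathFrom (x :: γ) x y := by
  obtain ⟨hc, hh, hl⟩ := hγ
  rcases γ with _ | ⟨w, γ⟩
  · simp at hh
  · obtain rfl : w = z := by simpa using hh
    exact ⟨List.isChain_cons_cons.2 ⟨hxz, hc⟩, rfl, by rwa [List.getLast?_cons_cons]⟩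

lemma pathTime_cons_of_isPathFrom {γ : List (Vert d)} {z y : Vert d} (hγ : IsPathFrom γ z y)
    (x : Vert d) : pathTime τ (x :: γ) = τ s(x, z) + pathTime τ γ := by
  obtain ⟨-, hh, -⟩ := hγ
  rcases γ with _ | ⟨w, γ⟩
  · simp at hh
  · obtain rfl : w = z := by simpa using hh
    exact pathTime_cons_cons τ x w γ

lemma fpt_le_pathTime (hτ : ∀ e, 0 ≤ τ e) {γ : List (Vert d)} {x y : Vert d}
    (hγ : IsPathFrom γ x y) : fpt τ x y ≤ pathTime τ γ :=
  csInf_le ⟨0, by rintro _ ⟨γ, -, rfl⟩; exact pathTime_nonneg hτ γ⟩ ⟨γ, hγ, rfl⟩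

lemma le_fpt {x y : Vert d} {c : ℝ} (hpath : ∃ γ, IsPathFrom γ x y)
    (h : ∀ γ, IsPathFrom γ x y → c ≤ pathTime τ γ) : c ≤ fpt τ x y := by
  obtain ⟨γ, hγ⟩ := hpath
  exact le_csInf ⟨_, γ, hγ, rfl⟩ (by rintro _ ⟨γ, hγ, rfl⟩; exact h γ hγ)

lemma fpt_le_add_pathTime (hτ : ∀ e, 0 ≤ τ e) {γ : List (Vert d)} {x z y : Vert d}
    (hxz : adj x z) (hγ : IsPathFrom γ z y) : fpt τ x y ≤ τ s(x, z) + pathTime τ γ :=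
  (fpt_le_pathTime hτ (hγ.cons hxz)).trans_eq (pathTime_cons_of_isPathFrom hγ x)

lemma adj_axisPt_succ (hd : 0 < d) (k : ℕ) : adj (axisPt d k) (axisPt d (k + 1)) := by
  unfold adj axisPt
  rw [Finset.sum_eq_single ⟨0, hd⟩]
  · simp
  · intro j _ hj
    simp [show (j : ℕ) ≠ 0 from fun h => hj (Fin.ext h)]
  · simp

lemma exists_isPathFrom_zero_axisPt (hd : 0 < d) (n : ℕ) :
    ∃ γ, IsPathFrom γ 0 (axisPt d n) := by
  refine ⟨(List.range (n + 1)).map (axisPt d), ?_, ?_, ?_⟩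
  · rw [List.Chain', List.isChain_map, List.isChain_range_succ]
    exact fun k _ => adj_axisPt_succ hd k
  · rw [List.range_succ_eq_map]
    simpa using funext fun i => by simp [axisPt]
  · simp [List.range_succ]

lemma axisPt_ne_zero (hd : 0 < d) {n : ℕ} (hn : n ≠ 0) : axisPt d n ≠ 0 := by
  intro h
  simpa [axisPt, hn] using congrFun h ⟨0, hd⟩

def IsOriginAvoidingPath (γ : List (Vert d)) (y : Vert d) : Prop :=
  ∃ z, adj 0 z ∧ IsPathFrom γ z y ∧ (0 : Vert d) ∉ γ

lemma add_le_pathTime_of_isPathFrom_zero (hτ : ∀ e, 0 ≤ τ e) {y : Vert d} (hy : y ≠ 0)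
    {a b : ℝ} (ha : ∀ z, adj 0 z → a ≤ τ s(0, z))
    (hb : ∀ γ, IsOriginAvoidingPath γ y → b ≤ pathTime τ γ)
    {γ : List (Vert d)} (hγ : IsPathFrom γ 0 y) : a + b ≤ pathTime τ γ := by
  obtain ⟨hc, hh, hl⟩ := hγ
  obtain ⟨σ, t, rfl, h0t⟩ :=
    List.exists_eq_append_cons_notMem (List.mem_of_mem_head? hh)
  rcases t with _ | ⟨z, t⟩
  · exact absurd (by simpa using hl) hy.symm
  have hct := List.isChain_cons_cons.1 (hc.suffix (List.suffix_append σ _))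
  have hl' : (z :: t).getLast? = some y := by
    rwa [List.getLast?_append_of_ne_nil _ (by simp), List.getLast?_cons_cons] at hl
  calc a + b ≤ τ s(0, z) + pathTime τ (z :: t) :=
        add_le_add (ha z hct.1) (hb _ ⟨z, hct.1, ⟨hct.2, rfl, hl'⟩, h0t⟩)
    _ = pathTime τ (0 :: z :: t) := (pathTime_cons_cons τ 0 z t).symm
    _ ≤ pathTime τ (σ ++ 0 :: z :: t) := pathTime_le_append hτ σ _

end Paths

section Neighbours

variable {d : ℕ}

def originNbr (d : ℕ) (p : Fin d × ℤˣ) : Vert d := Pi.single p.1 (p.2 : ℤ)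

lemma adj_zero_originNbr (p : Fin d × ℤˣ) : adj 0 (originNbr d p) := by
  unfold adj originNbr
  rw [Finset.sum_eq_single p.1 (fun j _ hj => by simp [hj]) (by simp)]
  simp

lemma exists_originNbr_eq {z : Vert d} (h : adj 0 z) : ∃ p, originNbr d p = z := by
  have hsum : ∑ i, (z i).natAbs = 1 := by simpa [adj] using h
  obtain ⟨i, hi⟩ : ∃ i, z i ≠ 0 := by
    by_contra! h0
    simp [h0] at hsum
  have hsplit := Finset.add_sum_erase Finset.univ (fun j => (z j).natAbs) (Finset.mem_univ i)
  have hzi : (z i).natAbs = 1 := by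
    have := Int.natAbs_ne_zero.2 hi
    omega
  have hrest : ∀ j ≠ i, z j = 0 := fun j hj => by
    have := Finset.sum_eq_zero_iff.1 (by omega : ∑ j ∈ Finset.univ.erase i, (z j).natAbs = 0) j
    simpa [hj] using this
  refine ⟨(i, (Int.isUnit_iff_natAbs_eq.2 hzi).unit), funext fun j => ?_⟩
  by_cases hj : j = i
  · subst hj; simp [originNbr]
  · simp [originNbr, hj, hrest j hj]

lemma originNbr_injective : Function.Injective (originNbr d) := by
  rintro ⟨i, u⟩ ⟨j, v⟩ h
  obtain rfl : i = j := by
    by_contra hij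
    simpa [originNbr, Pi.single_apply, hij] using congrFun h i
  simpa [originNbr, Units.ext_iff] using Pi.single_injective i h

def originEdge (p : Fin d × ℤˣ) : EdgeSet d :=
  ⟨s(0, originNbr d p), Sym2.fromRel_prop.2 (adj_zero_originNbr p)⟩

lemma originEdge_injective : Function.Injective (originEdge (d := d)) := fun _ _ h =>
  originNbr_injective (Sym2.congr_right.1 (congrArg Subtype.val h))

lemma card_fin_prod_units_int : Fintype.card (Fin d × ℤˣ) = 2 * d := by
  rw [Fintype.card_prod, Fintype.card_fin, mul_comm]
  rfl

lemma unitVec_eq_originNbr (hd : 0 < d) : unitVec d = originNbr d (⟨0, hd⟩, 1) := by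
  funext j
  by_cases hj : j = ⟨0, hd⟩
  · subst hj; simp [unitVec, originNbr]
  · simp [unitVec, originNbr, hj, show (j : ℕ) ≠ 0 from fun h => hj (Fin.ext h)]

end Neighbours

section Events

variable {d : ℕ} {Ω : Type*} {τ : Ω → Sym2 (Vert d) → ℝ}

lemma measurable_pathTime {m : MeasurableSpace Ω} {γ : List (Vert d)}
    (h : ∀ p ∈ γ.zip γ.tail, Measurable[m] fun ω => τ ω s(p.1, p.2)) :
    Measurable[m] fun ω => pathTime (τ ω) γ := by
  unfold pathTime
  generalize γ.zip γ.tail = l at h ⊢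
  induction l with
  | nil => exact measurable_const
  | cons p l ih =>
    simp only [List.map_cons, List.sum_cons]
    exact (h p List.mem_cons_self).add (ih fun q hq => h q (List.mem_cons_of_mem p hq))

variable (τ) in
abbrev edgeSigma (S : Set (EdgeSet d)) : MeasurableSpace Ω :=
  ⨆ e ∈ S, MeasurableSpace.comap (fun ω => τ ω e.1) inferInstance

lemma measurable_edgeSigma {S : Set (EdgeSet d)} {e : EdgeSet d} (he : e ∈ S) :
    Measurable[edgeSigma τ S] fun ω => τ ω e.1 :=
  Measurable.of_comap_le <|
    le_iSup₂ (f := fun (e : EdgeSet d) (_ : e ∈ S) =>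
      MeasurableSpace.comap (fun ω => τ ω e.1) inferInstance) e he

variable (τ) in
def originHeavy (a : ℝ) : Set Ω := {ω | ∀ p, a < τ ω (originEdge p).1}

variable (τ) in
def detourCostly (y : Vert d) (b : ℝ) : Set Ω :=
  {ω | ∀ γ, IsOriginAvoidingPath γ y → b ≤ pathTime (τ ω) γ}

lemma measurableSet_originHeavy (a : ℝ) :
    MeasurableSet[edgeSigma τ {e | (0 : Vert d) ∈ e.1}] (originHeavy τ a) := by
  simp only [originHeavy, Set.ofPred_forall]
  exact MeasurableSet.iInter fun p =>
    measurableSet_lt measurable_const (measurable_edgeSigma (Sym2.mem_mk_left _ _))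

lemma measurableSet_detourCostly (y : Vert d) (b : ℝ) :
    MeasurableSet[edgeSigma τ {e | (0 : Vert d) ∈ e.1}ᶜ] (detourCostly τ y b) := by
  simp only [detourCostly, Set.ofPred_forall]
  refine MeasurableSet.iInter fun γ => MeasurableSet.iInter fun hγ =>
    measurableSet_le measurable_const (measurable_pathTime fun p hp => ?_)
  obtain ⟨-, -, ⟨hc, -, -⟩, h0⟩ := hγ
  have hmem := List.of_mem_zip hp
  refine measurable_edgeSigma
    (e := ⟨s(p.1, p.2), Sym2.fromRel_prop.2 (hc.rel_of_mem_zip_tail hp)⟩) ?_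
  simp only [Set.mem_compl_iff, Set.mem_ofPred_eq, Sym2.mem_iff, not_or]
  exact ⟨fun h => h0 (h ▸ hmem.1), fun h => h0 (h ▸ List.mem_of_mem_tail hmem.2)⟩

lemma originHeavy_inter_detourCostly_subset (hnonneg : ∀ ω e, 0 ≤ τ ω e) {y : Vert d}
    (hy : y ≠ 0) (hpath : ∃ γ, IsPathFrom γ 0 y) (a b : ℝ) :
    originHeavy τ a ∩ detourCostly τ y b ⊆ {ω | a + b ≤ fpt (τ ω) 0 y} := by
  rintro ω ⟨hA, hB⟩
  refine le_fpt hpath fun γ hγ =>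
    add_le_pathTime_of_isPathFrom_zero (hnonneg ω) hy (fun z hz => ?_) hB hγ
  obtain ⟨p, rfl⟩ := exists_originNbr_eq hz
  exact (hA p).le

lemma compl_detourCostly_subset (hnonneg : ∀ ω e, 0 ≤ τ ω e) (y : Vert d) (b : ℝ) :
    (detourCostly τ y b)ᶜ ⊆
      {ω | fpt (τ ω) 0 y - ∑ p, τ ω (originEdge p).1 < b} := by
  intro ω hω
  simp only [detourCostly, Set.mem_compl_iff, Set.mem_ofPred_eq, not_forall, not_le] at hω
  obtain ⟨γ, ⟨z, hz, hγ, -⟩, hlt⟩ := hω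
  obtain ⟨p, rfl⟩ := exists_originNbr_eq hz
  have hp : τ ω (originEdge p).1 ≤ ∑ q, τ ω (originEdge q).1 :=
    Finset.single_le_sum (f := fun q => τ ω (originEdge q).1) (fun q _ => hnonneg ω _)
      (Finset.mem_univ p)
  have hfpt := fpt_le_add_pathTime (hnonneg ω) hz hγ
  simp only [Set.mem_ofPred_eq]
  linarith [show τ ω (originEdge p).1 = τ ω s(0, originNbr d p) from rfl]

variable [MeasurableSpace Ω]

lemma measurable_fpt (hmeas : ∀ e, Measurable fun ω => τ ω e) (x y : Vert d) :
    Measurable fun ω => fpt (τ ω) x y := by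
  have hinf (ω : Ω) :
      fpt (τ ω) x y = ⨅ γ : {γ // IsPathFrom γ x y}, pathTime (τ ω) γ := by
    rw [fpt, iInf]
    congr 1
    ext t
    simp [eq_comm]
  simp_rw [hinf]
  exact Measurable.iInf fun γ => measurable_pathTime fun _ _ => hmeas _

end Events

section Probability

variable {d : ℕ} {Ω : Type*} [MeasurableSpace Ω] {μ : Measure Ω}
  {τ : Ω → Sym2 (Vert d) → ℝ}

lemma tendsto_measure_lt_mul_of_ae_tendsto_div [IsFiniteMeasure μ] {X : ℕ → Ω → ℝ}
    (hX : ∀ n, Measurable (X n)) {c c' : ℝ} (hc : c' < c)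
    (h : ∀ᵐ ω ∂μ, Tendsto (fun n : ℕ => X n ω / n) atTop (𝓝 c)) :
    Tendsto (fun n : ℕ => μ {ω | X n ω < c' * n}) atTop (𝓝 0) := by
  have hprob := tendstoInMeasure_iff_dist.1
    (tendstoInMeasure_of_tendsto_ae (g := fun _ => c)
      (fun n => ((hX n).div_const _).aestronglyMeasurable) h) (c - c') (sub_pos.2 hc)
  refine tendsto_of_tendsto_of_tendsto_of_le_of_le' tendsto_const_nhds hprob
    (Eventually.of_forall fun _ => zero_le) ?_
  filter_upwards [eventually_gt_atTop 0] with n hn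
  refine measure_mono fun ω (hω : X n ω < c' * n) => ?_
  have hlt : X n ω / n < c' := (div_lt_iff₀ (Nat.cast_pos.2 hn)).2 hω
  rw [Set.mem_ofPred_eq, Real.dist_eq, abs_sub_comm]
  exact (by linarith : c - c' ≤ c - X n ω / n).trans (le_abs_self _)

lemma edgeSigma_le (hmeas : ∀ e, Measurable fun ω => τ ω e) (S : Set (EdgeSet d)) :
    edgeSigma τ S ≤ ‹MeasurableSpace Ω› :=
  iSup₂_le fun e _ => (hmeas e.1).comap_le

lemma measure_originHeavy_inter_detourCostly (hmeas : ∀ e, Measurable fun ω => τ ω e)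
    (hindep : iIndepFun (fun e : EdgeSet d => fun ω => τ ω e.1) μ) (a : ℝ) (y : Vert d)
    (b : ℝ) :
    μ (originHeavy τ a ∩ detourCostly τ y b) =
      μ (originHeavy τ a) * μ (detourCostly τ y b) :=
  (Indep_iff _ _ _).1
    (indep_biSup_compl
      (s := fun e : EdgeSet d => MeasurableSpace.comap (fun ω => τ ω e.1) inferInstance)
      (fun e => (hmeas e.1).comap_le) hindep.iIndep {e | (0 : Vert d) ∈ e.1}) _ _
    (measurableSet_originHeavy a) (measurableSet_detourCostly y b)

lemma measure_originHeavy (hmeas : ∀ e, Measurable fun ω => τ ω e)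
    (hindep : iIndepFun (fun e : EdgeSet d => fun ω => τ ω e.1) μ)
    (hident : ∀ e e' : EdgeSet d,
      Measure.map (fun ω => τ ω e.1) μ = Measure.map (fun ω => τ ω e'.1) μ)
    (e₀ : EdgeSet d) (a : ℝ) :
    μ (originHeavy τ a) = μ {ω | a < τ ω e₀.1} ^ (2 * d) := by
  have hiid (e : EdgeSet d) :
      μ ((fun ω => τ ω e.1) ⁻¹' Set.Ioi a) = μ {ω | a < τ ω e₀.1} :=
    (IdentDistrib.mk (hmeas e.1).aemeasurable (hmeas e₀.1).aemeasurable
      (hident e e₀)).measure_mem_eq measurableSet_Ioi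
  have hinter : originHeavy τ a = ⋂ p, (fun ω => τ ω (originEdge p).1) ⁻¹' Set.Ioi a := by
    ext; simp [originHeavy]
  rw [hinter, (hindep.precomp originEdge_injective).meas_iInter
    fun p => ⟨Set.Ioi a, measurableSet_Ioi, rfl⟩]
  simp only [hiid, Finset.prod_const, Finset.card_univ, card_fin_prod_units_int]

lemma tendsto_measureReal_detourCostly [IsProbabilityMeasure μ]
    (hmeas : ∀ e, Measurable fun ω => τ ω e) (hnonneg : ∀ ω e, 0 ≤ τ ω e) {tc ε : ℝ}
    (hε : 0 < ε) (htc : ∀ᵐ ω ∂μ,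
      Tendsto (fun n : ℕ => fpt (τ ω) 0 (axisPt d n) / n) atTop (𝓝 tc)) :
    Tendsto (fun n : ℕ => μ.real (detourCostly τ (axisPt d n) ((tc - ε) * n)))
      atTop (𝓝 1) := by
  -- `W` is the total weight at the origin; it is negligible on the scale `n`.
  set W : Ω → ℝ := fun ω => ∑ p, τ ω (originEdge p).1
  have hW : ∀ᵐ ω ∂μ,
      Tendsto (fun n : ℕ => (fpt (τ ω) 0 (axisPt d n) - W ω) / n) atTop (𝓝 tc) := by
    filter_upwards [htc] with ω hω
    simpa [sub_div] using hω.sub (tendsto_const_div_atTop_nhds_zero_nat (W ω))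
  have hsmall := tendsto_measure_lt_mul_of_ae_tendsto_div
    (fun n => (measurable_fpt hmeas 0 _).sub (Finset.measurable_sum _ fun p _ => hmeas _))
    (by linarith : tc - ε < tc) hW
  have hcompl : Tendsto (fun n : ℕ => μ (detourCostly τ (axisPt d n) ((tc - ε) * n))ᶜ)
      atTop (𝓝 0) :=
    tendsto_of_tendsto_of_tendsto_of_le_of_le tendsto_const_nhds hsmall
      (fun _ => zero_le) fun n => measure_mono (compl_detourCostly_subset hnonneg _ _)
  have hmeasB (n : ℕ) : MeasurableSet (detourCostly τ (axisPt d n) ((tc - ε) * n)) :=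
    edgeSigma_le hmeas _ _ (measurableSet_detourCostly _ _)
  have h1 := ((ENNReal.tendsto_toReal ENNReal.zero_ne_top).comp hcompl).const_sub 1
  simpa only [Function.comp_def, ← measureReal_def, probReal_compl_eq_one_sub (hmeasB _),
    sub_sub_cancel, ENNReal.toReal_zero, sub_zero] using h1

lemma eventually_le_measureReal_fpt_gt [IsProbabilityMeasure μ] (hd : 0 < d)
    (hmeas : ∀ e, Measurable fun ω => τ ω e) (hnonneg : ∀ ω e, 0 ≤ τ ω e)
    (hindep : iIndepFun (fun e : EdgeSet d => fun ω => τ ω e.1) μ)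
    (hident : ∀ e e' : EdgeSet d,
      Measure.map (fun ω => τ ω e.1) μ = Measure.map (fun ω => τ ω e'.1) μ)
    {c₁ α r : ℝ} (hc₁ : 0 ≤ c₁)
    (htail : ∀ᶠ t in atTop,
      c₁ * Real.exp (-α * t ^ r) ≤ μ.real {ω | t < τ ω s(0, unitVec d)})
    {tc : ℝ} (htc : ∀ᵐ ω ∂μ,
      Tendsto (fun n : ℕ => fpt (τ ω) 0 (axisPt d n) / n) atTop (𝓝 tc))
    {ξ θ : ℝ} (hξθ : ξ < θ) (hθ : 0 < θ) :
    ∀ᶠ n : ℕ in atTop, c₁ ^ (2 * d) / 2 * Real.exp (-(2 * d * α * θ ^ r) * n ^ r) ≤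
      μ.real {ω | (tc + ξ) * n < fpt (τ ω) 0 (axisPt d n)} := by
  set e₀ : EdgeSet d := originEdge (⟨0, hd⟩, 1)
  have he₀ : e₀.1 = s(0, unitVec d) := by rw [unitVec_eq_originNbr hd]; rfl
  set ε := (θ - ξ) / 2 with hε
  have hθn : Tendsto (fun n : ℕ => θ * n) atTop atTop :=
    tendsto_natCast_atTop_atTop.const_mul_atTop hθ
  filter_upwards [eventually_gt_atTop 0, hθn.eventually htail,
    (tendsto_measureReal_detourCostly hmeas hnonneg (by linarith : 0 < ε) htc).eventually
      (eventually_ge_nhds (by norm_num : (1 : ℝ) / 2 < 1))] with n hn hAn hBn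
  set A := originHeavy τ (θ * n)
  set B := detourCostly τ (axisPt d n) ((tc - ε) * n)
  have hAB : A ∩ B ⊆ {ω | (tc + ξ) * n < fpt (τ ω) 0 (axisPt d n)} := fun ω hω => by
    have hfpt := originHeavy_inter_detourCostly_subset hnonneg (axisPt_ne_zero hd hn.ne')
      (exists_isPathFrom_zero_axisPt hd n) _ _ hω
    have hεn : 0 < ε * n := mul_pos (by linarith) (Nat.cast_pos.2 hn)
    have hsplit : θ * n + (tc - ε) * n = (tc + ξ) * n + ε * n := by rw [hε]; ring
    simp only [Set.mem_ofPred_eq] at hfpt ⊢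
    linarith
  calc c₁ ^ (2 * d) / 2 * Real.exp (-(2 * d * α * θ ^ r) * n ^ r)
        = (c₁ * Real.exp (-α * (θ * n) ^ r)) ^ (2 * d) * (1 / 2) := by
          rw [Real.mul_rpow hθ.le n.cast_nonneg, mul_pow, ← Real.exp_nat_mul]
          push_cast
          ring_nf
    _ ≤ μ.real {ω | θ * n < τ ω e₀.1} ^ (2 * d) * μ.real B := by
          rw [he₀]
          gcongr
    _ = μ.real (A ∩ B) := by
          simp only [A, B, measureReal_def, measure_originHeavy_inter_detourCostly hmeas hindep,
            measure_originHeavy hmeas hindep hident e₀, ENNReal.toReal_mul, ENNReal.toReal_pow]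
    _ ≤ _ := measureReal_mono hAB

end Probability

lemma neg_le_liminf_log_div_rpow {p : ℕ → ℝ} {C κ r : ℝ} (hC : 0 < C) (hr : 0 < r)
    (hp₀ : ∀ n, 0 ≤ p n) (hp₁ : ∀ n, p n ≤ 1)
    (hlow : ∀ᶠ n : ℕ in atTop, C * Real.exp (-κ * (n : ℝ) ^ r) ≤ p n) :
    -κ ≤ liminf (fun n => Real.log (p n) / (n : ℝ) ^ r) atTop := by
  have hnr : Tendsto (fun n : ℕ => (n : ℝ) ^ r) atTop atTop :=
    (tendsto_rpow_atTop hr).comp tendsto_natCast_atTop_atTop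
  have hv : Tendsto (fun n : ℕ => Real.log C / (n : ℝ) ^ r - κ) atTop (𝓝 (-κ)) := by
    simpa using (tendsto_const_nhds.div_atTop hnr).sub_const κ
  have hle : ∀ᶠ n : ℕ in atTop,
      Real.log C / (n : ℝ) ^ r - κ ≤ Real.log (p n) / (n : ℝ) ^ r := by
    filter_upwards [hlow, eventually_gt_atTop 0] with n hn hn0
    have hpos : 0 < (n : ℝ) ^ r := Real.rpow_pos_of_pos (Nat.cast_pos.2 hn0) r
    have hlog : Real.log (C * Real.exp (-κ * (n : ℝ) ^ r)) ≤ Real.log (p n) :=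
      Real.log_le_log (by positivity) hn
    rw [Real.log_mul hC.ne' (Real.exp_pos _).ne', Real.log_exp] at hlog
    rw [div_sub' hpos.ne', div_le_div_iff_of_pos_right hpos]
    linarith
  have hbdd : IsBoundedUnder (· ≤ ·) atTop fun n : ℕ => Real.log (p n) / (n : ℝ) ^ r :=
    ⟨0, eventually_map.2 <| Eventually.of_forall fun n =>
      div_nonpos_of_nonpos_of_nonneg (Real.log_nonpos (hp₀ n) (hp₁ n)) (by positivity)⟩
  calc -κ = liminf (fun n : ℕ => Real.log C / (n : ℝ) ^ r - κ) atTop := hv.liminf_eq.symm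
    _ ≤ _ := liminf_le_liminf hle hv.isBoundedUnder_ge hbdd.isCoboundedUnder_ge

theorem fpp_upper_tail_ldp_lower_bound_general
    {d : ℕ} (hd : 2 ≤ d) {Ω : Type*} [MeasurableSpace Ω]
    (μ : Measure Ω) [IsProbabilityMeasure μ] (τ : Ω → Sym2 (Vert d) → ℝ)
    (hmeas : ∀ e, Measurable fun ω => τ ω e) (hnonneg : ∀ ω e, 0 ≤ τ ω e)
    (hindep : iIndepFun (fun e : EdgeSet d => fun ω => τ ω e.1) μ)
    (hident : ∀ e e' : EdgeSet d,
      Measure.map (fun ω => τ ω e.1) μ = Measure.map (fun ω => τ ω e'.1) μ)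
    (c₁ c₂ α r : ℝ) (hc₁ : 0 < c₁) (hr0 : 0 < r)
    (htail : ∀ᶠ t in atTop,
      c₁ * Real.exp (-α * t ^ r) ≤ (μ {ω | t < τ ω s(0, unitVec d)}).toReal ∧
      (μ {ω | t < τ ω s(0, unitVec d)}).toReal ≤ c₂ * Real.exp (-α * t ^ r))
    (tc : ℝ)
    (htc : ∀ᵐ ω ∂μ,
      Tendsto (fun n : ℕ => fpt (τ ω) 0 (axisPt d n) / n) atTop (nhds tc))
    (ξ : ℝ) (hξ : 0 < ξ) :
    -(2 * d * α * ξ ^ r) ≤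
      liminf (fun n : ℕ =>
        Real.log (μ {ω | (tc + ξ) * n < fpt (τ ω) 0 (axisPt d n)}).toReal / (n : ℝ) ^ r)
        atTop := by
  have hbound (θ : ℝ) (hθ : ξ < θ) :
      -(2 * d * α * θ ^ r) ≤ liminf (fun n : ℕ =>
        Real.log (μ {ω | (tc + ξ) * n < fpt (τ ω) 0 (axisPt d n)}).toReal / (n : ℝ) ^ r)
        atTop :=
    neg_le_liminf_log_div_rpow (by positivity) hr0 (fun _ => measureReal_nonneg)
      (fun _ => measureReal_le_one)
      (eventually_le_measureReal_fpt_gt (by omega) hmeas hnonneg hindep hident hc₁.le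
        (htail.mono fun _ h => h.1) htc hθ (hξ.trans hθ))
  have hcont : Tendsto (fun θ : ℝ => -(2 * d * α * θ ^ r)) (𝓝[>] ξ)
      (𝓝 (-(2 * d * α * ξ ^ r))) :=
    (continuousAt_const.mul (Real.continuousAt_rpow_const ξ r (Or.inr hr0.le))).neg.tendsto
      |>.mono_left nhdsWithin_le_nhds
  exact le_of_tendsto hcont (eventually_nhdsWithin_of_forall hbound)

theorem fpp_upper_tail_ldp_lower_bound
    {d : ℕ} (hd : 2 ≤ d) {Ω : Type*} [MeasurableSpace Ω]
    (μ : Measure Ω) [IsProbabilityMeasure μ] (τ : Ω → Sym2 (Vert d) → ℝ)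
    (hmeas : ∀ e, Measurable fun ω => τ ω e) (hnonneg : ∀ ω e, 0 ≤ τ ω e)
    (hindep : iIndepFun (fun e : EdgeSet d => fun ω => τ ω e.1) μ)
    (hident : ∀ e e' : EdgeSet d,
      Measure.map (fun ω => τ ω e.1) μ = Measure.map (fun ω => τ ω e'.1) μ)
    (c₁ c₂ α r : ℝ) (hc₁ : 0 < c₁) (hc₂ : 0 < c₂) (hα : 0 < α) (hr0 : 0 < r) (hr1 : r ≤ 1)
    (h0 : μ {ω | τ ω s(0, unitVec d) = 0} < ENNReal.ofReal (pc d))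
    (htail : ∀ᶠ t in atTop,
      c₁ * Real.exp (-α * t ^ r) ≤ (μ {ω | t < τ ω s(0, unitVec d)}).toReal ∧
      (μ {ω | t < τ ω s(0, unitVec d)}).toReal ≤ c₂ * Real.exp (-α * t ^ r))
    (tc : ℝ)
    (htc : ∀ᵐ ω ∂μ,
      Tendsto (fun n : ℕ => fpt (τ ω) 0 (axisPt d n) / n) atTop (nhds tc))
    (ξ : ℝ) (hξ : 0 < ξ) :
    -(2 * d * α * ξ ^ r) ≤
      liminf (fun n : ℕ =>
        Real.log (μ {ω | (tc + ξ) * n < fpt (τ ω) 0 (axisPt d n)}).toReal / (n : ℝ) ^ r)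
        atTop :=
  fpp_upper_tail_ldp_lower_bound_general hd μ τ hmeas hnonneg hindep hident c₁ c₂ α r hc₁ hr0 htail
    tc htc ξ hξ
end
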